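/- arXiv:2212.01259 — 2 statements merged into one kernel-verified Lean document; each statement's English description precedes it below -/
import Mathlib

section
/- Let B : ℝ^p → ℝ be differentiable, μ-strongly convex and l-smooth with 0 < μ < l. Fix η ∈ (0, 2μ/(l(μ+l))] and let κ = η(μ+l)/2 and α = (μ + l − sqrt((μ+l)² − 4μl κ²))/(2κ). Then 0 < α < 1/η, and for any vectors θ, θ* in ℝ^p, ‖θ − η(∇B(θ) − ∇B(θ*)) − θ*‖ ≤ (1 − ηα)‖θ − θ*‖. -/
open RealInnerProductSpace

set_option maxHeartbeats 1000000 in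
theorem stmt0 {p : ℕ} (B : EuclideanSpace ℝ (Fin p) → ℝ)
    (gradB : EuclideanSpace ℝ (Fin p) → EuclideanSpace ℝ (Fin p))
    (hdiff : ∀ θ, HasGradientAt B (gradB θ) θ)
    (μ l η : ℝ) (hμ : 0 < μ) (hμl : μ < l)
    (hsc : ∀ x y, B x ≥ B y + ⟪gradB y, x - y⟫ + μ / 2 * ‖x - y‖ ^ 2)
    (hsm : ∀ x y, B x ≤ B y + ⟪gradB y, x - y⟫ + l / 2 * ‖x - y‖ ^ 2)
    (hη : 0 < η) (hη2 : η ≤ 2 * μ / (l * (μ + l)))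
    (κ α : ℝ) (hκ : κ = η * (μ + l) / 2)
    (hα : α = (μ + l - Real.sqrt ((μ + l) ^ 2 - 4 * μ * l * κ ^ 2)) / (2 * κ)) :
    0 < α ∧ α < 1 / η ∧
      ∀ θ θstar : EuclideanSpace ℝ (Fin p),
        ‖θ - η • (gradB θ - gradB θstar) - θstar‖ ≤ (1 - η * α) * ‖θ - θstar‖ := by
  have hl : 0 < l := hμ.trans hμl
  have hs : 0 < μ + l := by linarith
  have hη2' : η * (l * (μ + l)) ≤ 2 * μ :=
    (le_div_iff₀ (by positivity)).mp hη2
  have hημl : η ^ 2 * (μ * l) < 1 := by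
    have h1 : η * (l * (μ + l)) ≤ 2 * μ := hη2'
    nlinarith [mul_pos hη hμ, mul_pos hμ hl, sq_nonneg (η * l - 1)]
  set t := Real.sqrt (1 - η ^ 2 * (μ * l)) with ht
  have ht2 : t ^ 2 = 1 - η ^ 2 * (μ * l) := Real.sq_sqrt (by linarith)
  have ht0 : 0 < t := Real.sqrt_pos.mpr (by linarith)
  have ht1 : t < 1 := by
    nlinarith [mul_pos (mul_pos hη hη) (mul_pos hμ hl)]
  have hsqrt : Real.sqrt ((μ + l) ^ 2 - 4 * μ * l * κ ^ 2) = (μ + l) * t := by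
    rw [hκ, show (μ + l) ^ 2 - 4 * μ * l * (η * (μ + l) / 2) ^ 2
        = (μ + l) ^ 2 * (1 - η ^ 2 * (μ * l)) by ring,
      Real.sqrt_mul (sq_nonneg _), Real.sqrt_sq hs.le, ht]
  have hαval : α = (1 - t) / η := by
    rw [hα, hsqrt, hκ]
    field_simp
  have hηα : η * α = 1 - t := by
    rw [hαval]; field_simp
  refine ⟨?_, ?_, ?_⟩
  · rw [hαval]; exact div_pos (by linarith) hη
  · rw [hαval, div_lt_div_iff₀ hη hη]; nlinarith
  · intro θ θstar
    -- strong monotonicity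
    have hmono : ∀ x y : EuclideanSpace ℝ (Fin p),
        μ * ‖x - y‖ ^ 2 ≤ ⟪gradB x - gradB y, x - y⟫ := by
      intro x y
      have h1 := hsc x y
      have h2 := hsc y x
      have e1 : ⟪gradB x, y - x⟫ = -⟪gradB x, x - y⟫ := by
        rw [show (y - x : EuclideanSpace ℝ (Fin p)) = -(x - y) by abel, inner_neg_right]
      have e2 : ⟪gradB x - gradB y, x - y⟫ = ⟪gradB x, x - y⟫ - ⟪gradB y, x - y⟫ :=
        inner_sub_left _ _ _
      have e3 : ‖y - x‖ = ‖x - y‖ := norm_sub_rev _ _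
      rw [e3] at h2
      rw [e1] at h2
      linarith [h1, h2, e2.ge, e2.le]
    -- convexity
    have hconv : ∀ x y : EuclideanSpace ℝ (Fin p), B x ≥ B y + ⟪gradB y, x - y⟫ := by
      intro x y
      have := hsc x y
      nlinarith [sq_nonneg ‖x - y‖]
    -- co-coercivity building block
    have hco : ∀ x y : EuclideanSpace ℝ (Fin p),
        B y ≥ B x + ⟪gradB x, y - x⟫ + 1 / (2 * l) * ‖gradB y - gradB x‖ ^ 2 := by
      intro x y
      set G := gradB y - gradB x with hG
      set z := y - (1 / l) • G with hz
      have h1 := hconv z x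
      have h2 := hsm z y
      have ezy : (z - y : EuclideanSpace ℝ (Fin p)) = (-(1 / l)) • G := by
        rw [hz]; module
      have ezx : (z - x : EuclideanSpace ℝ (Fin p)) = (y - x) - (1 / l) • G := by
        rw [hz]; abel
      have i1 : ⟪gradB y, z - y⟫ = -(1 / l) * ⟪gradB y, G⟫ := by
        rw [ezy, real_inner_smul_right]
      have i2 : ‖z - y‖ ^ 2 = (1 / l) ^ 2 * ‖G‖ ^ 2 := by
        rw [ezy, norm_smul, Real.norm_eq_abs, abs_neg, abs_of_pos (by positivity : (0:ℝ) < 1 / l)]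
        ring
      have i3 : ⟪gradB x, z - x⟫ = ⟪gradB x, y - x⟫ - (1 / l) * ⟪gradB x, G⟫ := by
        rw [ezx, inner_sub_right, real_inner_smul_right]
      have i4 : ⟪gradB y, G⟫ - ⟪gradB x, G⟫ = ‖G‖ ^ 2 := by
        rw [show ⟪gradB y, G⟫ - ⟪gradB x, G⟫ = ⟪gradB y - gradB x, G⟫ from
          (inner_sub_left _ _ _).symm, ← hG, real_inner_self_eq_norm_sq]
      have hll : l / 2 * ((1 / l) ^ 2 * ‖G‖ ^ 2) = 1 / (2 * l) * ‖G‖ ^ 2 := by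
        field_simp
      rw [i3] at h1
      rw [i1, i2, hll] at h2
      have hinv : 1 / l * ‖G‖ ^ 2 - 1 / (2 * l) * ‖G‖ ^ 2 = 1 / (2 * l) * ‖G‖ ^ 2 := by
        field_simp; ring
      have i4l : 1 / l * ⟪gradB y, G⟫ - 1 / l * ⟪gradB x, G⟫ = 1 / l * ‖G‖ ^ 2 := by
        rw [← mul_sub, i4]
      clear_value z G
      linarith [h1, h2, i4l, hinv]
    -- co-coercivity
    have hcoc : ∀ x y : EuclideanSpace ℝ (Fin p),
        1 / l * ‖gradB x - gradB y‖ ^ 2 ≤ ⟪gradB x - gradB y, x - y⟫ := by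
      intro x y
      have h1 := hco x y
      have h2 := hco y x
      have e1 : ⟪gradB y, x - y⟫ = -⟪gradB y, y - x⟫ := by
        rw [show (x - y : EuclideanSpace ℝ (Fin p)) = -(y - x) by abel, inner_neg_right]
      have e2 : ⟪gradB x - gradB y, x - y⟫ = ⟪gradB x, x - y⟫ - ⟪gradB y, x - y⟫ :=
        inner_sub_left _ _ _
      have e3 : ‖gradB y - gradB x‖ = ‖gradB x - gradB y‖ := norm_sub_rev _ _
      have e4 : ⟪gradB x, y - x⟫ = -⟪gradB x, x - y⟫ := by
        rw [show (y - x : EuclideanSpace ℝ (Fin p)) = -(x - y) by abel, inner_neg_right]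
      rw [e3] at h1
      rw [e4] at h1
      rw [e1] at h2
      have h12l : (0:ℝ) < 1 / (2 * l) := by positivity
      have : 1 / (2 * l) * ‖gradB x - gradB y‖ ^ 2 + 1 / (2 * l) * ‖gradB x - gradB y‖ ^ 2
          = 1 / l * ‖gradB x - gradB y‖ ^ 2 := by field_simp; ring
      linarith [h1, h2, e2.ge, e2.le]
    -- Lipschitz bound squared
    set d := θ - θstar with hd
    set G := gradB θ - gradB θstar with hGdef
    have h1 := hcoc θ θstar
    have hmono' := hmono θ θstar
    have hrw : θ - η • G - θstar = d - η • G := by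
      rw [hd, hGdef]; abel
    clear_value d G
    rw [← hGdef, ← hd] at h1 hmono'
    have hcs : ⟪G, d⟫ ≤ ‖G‖ * ‖d‖ := real_inner_le_norm _ _
    have hGl2 : ‖G‖ ^ 2 ≤ l ^ 2 * ‖d‖ ^ 2 := by
      have h1' : ‖G‖ ^ 2 ≤ l * ⟪G, d⟫ := by
        have h := mul_le_mul_of_nonneg_left h1 hl.le
        rwa [show l * (1 / l * ‖G‖ ^ 2) = ‖G‖ ^ 2 by field_simp] at h
      nlinarith [h1', mul_le_mul_of_nonneg_left hcs hl.le,
        sq_nonneg (‖G‖ - l * ‖d‖), norm_nonneg G, norm_nonneg d]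
    have hexp : ‖d - η • G‖ ^ 2 = ‖d‖ ^ 2 - 2 * (η * ⟪G, d⟫) + η ^ 2 * ‖G‖ ^ 2 := by
      rw [norm_sub_sq_real, real_inner_smul_right, real_inner_comm, norm_smul,
        Real.norm_eq_abs, abs_of_pos hη]
      ring
    have key : ‖d - η • G‖ ^ 2 ≤ (t * ‖d‖) ^ 2 := by
      rw [hexp]
      have hc : 0 ≤ η * (2 * μ - η * (l * (μ + l))) := by
        apply mul_nonneg hη.le; linarith
      nlinarith [mul_le_mul_of_nonneg_left hmono' (by positivity : (0:ℝ) ≤ 2 * η),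
        mul_le_mul_of_nonneg_left hGl2 (sq_nonneg η),
        mul_nonneg hc (sq_nonneg ‖d‖)]
    rw [hrw, show 1 - η * α = t by rw [hηα]; ring]
    nlinarith [key, norm_nonneg (d - η • G), mul_nonneg ht0.le (norm_nonneg d)]
end

section
/- Let A be a symmetric positive definite p×p real matrix with smallest eigenvalue λ_min(A), and let Λ, S, P be symmetric matrices with ‖P‖₂ ≤ L₄² (P acting on vectorized matrices, representing M ↦ E[H Λ H]). Suppose Λ solves ΛA + AΛ − η·𝒫(Λ) = ηS where 𝒫 is a linear operator on symmetric matrices with ‖vec(𝒫(Λ))‖ ≤ L₄²‖Λ‖_F, and η L₄² < 2λ_min(A). Then ‖Λ‖_F ≤ η‖S‖_F / (2λ_min(A) − ηL₄²). -/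
/-
Pairing the equation with `Λ` in the Frobenius inner product: for symmetric `Λ`,
`⟪ΛA + AΛ, Λ⟫ = 2 tr(ΛAΛ) ≥ 2 λ_min ‖Λ‖²`, so by Cauchy–Schwarz `2 λ_min ‖Λ‖ ≤ ‖ΛA + AΛ‖`.
The right-hand side equals `η ‖𝒫Λ + S‖ ≤ η (L₄² ‖Λ‖ + ‖S‖)`, and the smallness condition
`η L₄² < 2 λ_min` lets the `‖Λ‖` terms be collected on the left.
-/

/-- Frobenius norm of a matrix. -/
noncomputable def frobNorm {m n : Type*} [Fintype m] [Fintype n]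
    (M : Matrix m n ℝ) : ℝ :=
  Real.sqrt (∑ i, ∑ j, (M i j) ^ 2)

open Matrix

section Frobenius

variable {m n : Type*} [Fintype m] [Fintype n]

theorem frobNorm_eq_norm_vec (M : Matrix m n ℝ) :
    frobNorm M = ‖WithLp.toLp 2 M.vec‖ := by
  rw [EuclideanSpace.norm_eq, frobNorm, Finset.sum_comm, ← Finset.sum_product']
  simp [vec]

theorem frobNorm_nonneg (M : Matrix m n ℝ) : 0 ≤ frobNorm M :=
  Real.sqrt_nonneg _

theorem frobNorm_add_le (M N : Matrix m n ℝ) : frobNorm (M + N) ≤ frobNorm M + frobNorm N := by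
  simpa only [frobNorm_eq_norm_vec, vec_add, WithLp.toLp_add] using norm_add_le _ _

theorem frobNorm_smul (c : ℝ) (M : Matrix m n ℝ) : frobNorm (c • M) = |c| * frobNorm M := by
  simp only [frobNorm_eq_norm_vec, vec_smul, WithLp.toLp_smul, norm_smul, Real.norm_eq_abs]

theorem trace_transpose_mul_le_frobNorm_mul (M N : Matrix m n ℝ) :
    (Mᵀ * N).trace ≤ frobNorm M * frobNorm N := by
  have := real_inner_le_norm (WithLp.toLp 2 M.vec) (WithLp.toLp 2 N.vec)
  rwa [EuclideanSpace.inner_eq_star_dotProduct, star_trivial, dotProduct_comm,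
    vec_dotProduct_vec, ← frobNorm_eq_norm_vec, ← frobNorm_eq_norm_vec] at this

theorem sq_frobNorm (M : Matrix m n ℝ) : frobNorm M ^ 2 = (Mᵀ * M).trace := by
  rw [frobNorm_eq_norm_vec, EuclideanSpace.norm_sq_eq, ← vec_dotProduct_vec]
  simp [dotProduct, sq]

end Frobenius

namespace Matrix

theorem IsHermitian.posSemidef_sub_smul_one {n : Type*} [Fintype n] [DecidableEq n]
    {A : Matrix n n ℝ} (hA : A.IsHermitian) {c : ℝ} (hc : ∀ i, c ≤ hA.eigenvalues i) :
    (A - c • 1).PosSemidef := by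
  open scoped MatrixOrder in
  have : algebraMap ℝ (Matrix n n ℝ) c ≤ A := by
    rw [algebraMap_le_iff_le_spectrum (ha := hA.isSelfAdjoint),
      hA.spectrum_real_eq_range_eigenvalues]
    rintro _ ⟨i, rfl⟩
    exact hc i
  rwa [Algebra.algebraMap_eq_smul_one, le_iff] at this

end Matrix

section Symmetrized

variable {n : Type*} [Fintype n] [DecidableEq n]

theorem mul_sq_frobNorm_le_trace_mul_mul {A Λ : Matrix n n ℝ} {c : ℝ}
    (hA : (A - c • 1).PosSemidef) : c * frobNorm Λ ^ 2 ≤ (Λᵀ * A * Λ).trace := by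
  have h := (hA.conjTranspose_mul_mul_same Λ).trace_nonneg
  rw [conjTranspose_eq_transpose_of_trivial, mul_sub, sub_mul, trace_sub, Matrix.mul_smul, mul_one,
    Matrix.smul_mul, trace_smul, ← sq_frobNorm, smul_eq_mul] at h
  linarith

theorem two_mul_mul_frobNorm_le_frobNorm_mul_add_mul {A Λ : Matrix n n ℝ} {c : ℝ}
    (hA : (A - c • 1).PosSemidef) (hΛ : Λ.IsSymm) :
    2 * c * frobNorm Λ ≤ frobNorm (Λ * A + A * Λ) := by
  have hinner : (Λᵀ * (Λ * A + A * Λ)).trace = 2 * (Λᵀ * A * Λ).trace := by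
    rw [mul_add, trace_add, hΛ.eq, trace_mul_comm Λ (Λ * A), ← mul_assoc, two_mul]
  have hlow : 2 * c * frobNorm Λ * frobNorm Λ ≤ frobNorm (Λ * A + A * Λ) * frobNorm Λ := by
    have hquad := mul_sq_frobNorm_le_trace_mul_mul (Λ := Λ) hA
    rw [sq] at hquad
    linarith [trace_transpose_mul_le_frobNorm_mul Λ (Λ * A + A * Λ)]
  rcases (frobNorm_nonneg Λ).eq_or_lt with h0 | hpos
  · rw [← h0, mul_zero]
    exact frobNorm_nonneg _
  · exact le_of_mul_le_mul_right hlow hpos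

end Symmetrized

theorem stmt16_general {p : ℕ} (A Λ S : Matrix (Fin p) (Fin p) ℝ)
    (hA : A.PosDef) (hΛ : Λ.IsSymm)
    (P : Matrix (Fin p) (Fin p) ℝ →ₗ[ℝ] Matrix (Fin p) (Fin p) ℝ)
    (L₄ η lammin : ℝ)
    (hmin : IsLeast (Set.range hA.1.eigenvalues) lammin)
    (hP : ∀ M : Matrix (Fin p) (Fin p) ℝ, M.IsSymm → frobNorm (P M) ≤ L₄ ^ 2 * frobNorm M)
    (hη : 0 < η) (hsmall : η * L₄ ^ 2 < 2 * lammin)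
    (heq : Λ * A + A * Λ - η • P Λ = η • S) :
    frobNorm Λ ≤ η * frobNorm S / (2 * lammin - η * L₄ ^ 2) := by
  have hshift : (A - lammin • 1).PosSemidef :=
    Matrix.IsHermitian.posSemidef_sub_smul_one hA.1 fun i => hmin.2 ⟨i, rfl⟩
  have hlower := two_mul_mul_frobNorm_le_frobNorm_mul_add_mul hshift hΛ
  have hupper : frobNorm (Λ * A + A * Λ) ≤ η * (L₄ ^ 2 * frobNorm Λ) + η * frobNorm S := by
    rw [sub_eq_iff_eq_add.mp heq]
    refine (frobNorm_add_le _ _).trans ?_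
    rw [frobNorm_smul, frobNorm_smul, abs_of_pos hη]
    linarith [mul_le_mul_of_nonneg_left (hP Λ hΛ) hη.le]
  rw [le_div_iff₀ (by linarith)]
  linarith

theorem stmt16 {p : ℕ} (A Λ S : Matrix (Fin p) (Fin p) ℝ)
    (hA : A.PosDef) (hΛ : Λ.IsSymm) (hS : S.IsSymm)
    (P : Matrix (Fin p) (Fin p) ℝ →ₗ[ℝ] Matrix (Fin p) (Fin p) ℝ)
    (L₄ η lammin : ℝ)
    (hmin : IsLeast (Set.range hA.1.eigenvalues) lammin)
    (hP : ∀ M : Matrix (Fin p) (Fin p) ℝ, M.IsSymm → frobNorm (P M) ≤ L₄ ^ 2 * frobNorm M)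
    (hη : 0 < η) (hsmall : η * L₄ ^ 2 < 2 * lammin)
    (heq : Λ * A + A * Λ - η • P Λ = η • S) :
    frobNorm Λ ≤ η * frobNorm S / (2 * lammin - η * L₄ ^ 2) :=
  stmt16_general A Λ S hA hΛ P L₄ η lammin hmin hP hη hsmall heq
end
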